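/- Let |ψ⟩ = Σ_i t_i |i⟩ be a pure singlet state in (ℂ^d)^{⊗n}. Then there exists K ∈ ℕ such that every multi-index l with t_l ≠ 0 contains each value k ∈ {0,…,d−1} exactly K times. In particular, d divides n, with n = K·d. -/

import Mathlib

open scoped BigOperators

/-- The action of `U^{⊗n}` on the coefficient vector of a state in `(ℂ^d)^{⊗n}`. -/
noncomputable def tensorAction {d n : ℕ} (U : Matrix (Fin d) (Fin d) ℂ)
    (t : (Fin n → Fin d) → ℂ) : (Fin n → Fin d) → ℂ :=
  fun i => ∑ j : Fin n → Fin d, (∏ α : Fin n, U (i α) (j α)) * t j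

/-!
Applying `U^{⊗n}` for the diagonal unitary `U` that multiplies `|k⟩` by a phase `z` scales the
coefficient `t l` by `z ^ N_k(l)`, where `N_k(l)` counts the occurrences of `k` in `l`. Since `t` is
an eigenvector, `z ^ N_k(l)` is the same for all `l` in the support; taking `z` a primitive
`(n+1)`-st root of unity, so is `N_k(l)`. The permutation unitary swapping `|k⟩` and `|k'⟩` maps
the support into itself and exchanges `N_k` and `N_k'`, so all counts agree; they sum to `n`.
-/

open Finset

section Occurrences

variable {ι κ : Type*} [Fintype ι] [DecidableEq κ]

def occurrences (l : ι → κ) (k : κ) : ℕ := #{α | l α = k}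

lemma occurrences_le_card (l : ι → κ) (k : κ) : occurrences l k ≤ Fintype.card ι :=
  card_filter_le _ _

lemma occurrences_comp_equiv {κ' : Type*} [DecidableEq κ'] (σ : κ ≃ κ') (l : ι → κ) (k : κ) :
    occurrences (σ ∘ l) (σ k) = occurrences l k := by
  simp [occurrences]

lemma prod_mulSingle_eq_pow_occurrences {M : Type*} [CommMonoid M] (l : ι → κ) (k : κ) (z : M) :
    ∏ α, (Pi.mulSingle k z : κ → M) (l α) = z ^ occurrences l k := by
  simp [Pi.mulSingle_apply, prod_ite, occurrences]

lemma sum_occurrences [Fintype κ] (l : ι → κ) : ∑ k, occurrences l k = Fintype.card ι :=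
  (card_eq_sum_card_fiberwise fun α _ => mem_univ (l α)).symm

lemma exists_occurrences_eq_and_card_eq_mul [Fintype κ] (l : ι → κ)
    (h : ∀ k k', occurrences l k = occurrences l k') :
    ∃ K, (∀ k, occurrences l k = K) ∧ Fintype.card ι = K * Fintype.card κ := by
  rcases isEmpty_or_nonempty κ with _ | ⟨⟨k₀⟩⟩
  · have : IsEmpty ι := l.isEmpty
    exact ⟨0, isEmptyElim, by simp⟩
  · refine ⟨occurrences l k₀, fun k => h k k₀, ?_⟩
    simp [← sum_occurrences l, h _ k₀, mul_comm]

end Occurrences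

namespace Matrix

variable {n α : Type*} [Fintype n] [DecidableEq n] [CommRing α] [StarRing α]

lemma diagonal_mem_unitaryGroup {z : n → α} (hz : ∀ i, z i ∈ unitary α) :
    diagonal z ∈ unitaryGroup n α := by
  rw [mem_unitaryGroup_iff, star_eq_conjTranspose, diagonal_conjTranspose,
    diagonal_mul_diagonal, ← diagonal_one]
  exact congrArg diagonal (funext fun i => Unitary.mul_star_self_of_mem (hz i))

lemma permMatrix_mem_unitaryGroup (σ : Equiv.Perm n) :
    σ.permMatrix α ∈ unitaryGroup n α := by
  rw [mem_unitaryGroup_iff, star_eq_conjTranspose, conjTranspose_permMatrix, ← permMatrix_mul,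
    inv_mul_cancel, permMatrix_one]

end Matrix

def IsSinglet {d n : ℕ} (t : (Fin n → Fin d) → ℂ) : Prop :=
  ∀ U ∈ Matrix.unitaryGroup (Fin d) ℂ, ∃ c : ℂ, tensorAction U t = c • t

section TensorAction

variable {d n : ℕ}

lemma tensorAction_apply_of_eq_zero_of_ne (U : Matrix (Fin d) (Fin d) ℂ) (f : Fin d → Fin d)
    (hU : ∀ i j, j ≠ f i → U i j = 0) (t : (Fin n → Fin d) → ℂ) (l : Fin n → Fin d) :
    tensorAction U t l = (∏ α, U (l α) (f (l α))) * t (f ∘ l) := by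
  refine sum_eq_single_of_mem _ (mem_univ _) fun j _ hj => ?_
  obtain ⟨α, hα⟩ := Function.ne_iff.mp hj
  rw [prod_eq_zero (mem_univ α) (hU _ _ hα), zero_mul]

lemma tensorAction_diagonal (z : Fin d → ℂ) (t : (Fin n → Fin d) → ℂ) (l : Fin n → Fin d) :
    tensorAction (Matrix.diagonal z) t l = (∏ α, z (l α)) * t l := by
  simpa using tensorAction_apply_of_eq_zero_of_ne _ id
    (fun i j h => Matrix.diagonal_apply_ne z (Ne.symm h)) t l

lemma tensorAction_permMatrix (σ : Equiv.Perm (Fin d)) (t : (Fin n → Fin d) → ℂ)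
    (l : Fin n → Fin d) :
    tensorAction (σ.permMatrix ℂ) t l = t (σ ∘ l) := by
  simpa [PEquiv.toMatrix_apply] using tensorAction_apply_of_eq_zero_of_ne (σ.permMatrix ℂ) σ
    (fun i j h => by simp [PEquiv.toMatrix_apply, Ne.symm h]) t l

end TensorAction

namespace IsSinglet

variable {d n : ℕ} {t : (Fin n → Fin d) → ℂ} {l m : Fin n → Fin d}

lemma apply_comp_ne_zero (ht : IsSinglet t) (σ : Equiv.Perm (Fin d)) (hl : t l ≠ 0) :
    t (σ ∘ l) ≠ 0 := by
  obtain ⟨c, hc⟩ := ht _ (Matrix.permMatrix_mem_unitaryGroup σ⁻¹)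
  have h : t l = c * t (σ ∘ l) := by
    simpa [tensorAction_permMatrix, Function.comp_def] using congrFun hc (σ ∘ l)
  exact right_ne_zero_of_mul (h ▸ hl)

lemma pow_occurrences_eq (ht : IsSinglet t) {z : ℂ} (hz : z ∈ unitary ℂ) (hl : t l ≠ 0)
    (hm : t m ≠ 0) (k : Fin d) : z ^ occurrences l k = z ^ occurrences m k := by
  have hU : Matrix.diagonal (Pi.mulSingle k z) ∈ Matrix.unitaryGroup (Fin d) ℂ :=
    Matrix.diagonal_mem_unitaryGroup fun i => by
      rcases eq_or_ne i k with rfl | hi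
      · simpa using hz
      · simp [Pi.mulSingle_eq_of_ne hi]
  obtain ⟨c, hc⟩ := ht _ hU
  have eigen : ∀ l, t l ≠ 0 → z ^ occurrences l k = c := fun l hl => by
    have h := congrFun hc l
    rw [tensorAction_diagonal, prod_mulSingle_eq_pow_occurrences, Pi.smul_apply,
      smul_eq_mul] at h
    exact mul_right_cancel₀ hl h
  rw [eigen l hl, eigen m hm]

lemma occurrences_eq_of_ne_zero (ht : IsSinglet t) (hl : t l ≠ 0) (hm : t m ≠ 0) (k : Fin d) :
    occurrences l k = occurrences m k := by
  -- The powers `ζ ^ 0, …, ζ ^ n` are distinct, and every count is at most `n`.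
  have hζ := Complex.isPrimitiveRoot_exp (n + 1) n.succ_ne_zero
  have hζu : Complex.exp (2 * Real.pi * Complex.I / (n + 1 : ℕ)) ∈ unitary ℂ := by
    rw [Unitary.mem_iff_star_mul_self, Complex.star_def, Complex.conj_mul',
      hζ.norm'_eq_one n.succ_ne_zero]
    simp
  refine hζ.pow_inj ?_ ?_ (ht.pow_occurrences_eq hζu hl hm k)
  · simpa [Nat.lt_succ_iff] using occurrences_le_card l k
  · simpa [Nat.lt_succ_iff] using occurrences_le_card m k

lemma occurrences_eq_occurrences (ht : IsSinglet t) (hl : t l ≠ 0) (k k' : Fin d) :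
    occurrences l k = occurrences l k' := by
  calc occurrences l k = occurrences (Equiv.swap k k' ∘ l) k' := by
        rw [← occurrences_comp_equiv (Equiv.swap k k') l k, Equiv.swap_apply_left]
    _ = occurrences l k' :=
        ht.occurrences_eq_of_ne_zero (ht.apply_comp_ne_zero _ hl) hl k'

end IsSinglet

/-- For a pure singlet state `|ψ⟩ = ∑ᵢ tᵢ|i⟩ ∈ (ℂ^d)^{⊗n}` there exists `K ∈ ℕ`
such that every multi-index `l` with `t l ≠ 0` contains each value
`k ∈ {0,…,d-1}` exactly `K` times; in particular `n = K · d`. -/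
theorem stmt_6 (d n : ℕ) (t : (Fin n → Fin d) → ℂ) (ht : t ≠ 0)
    (hsinglet : ∀ U ∈ Matrix.unitaryGroup (Fin d) ℂ, ∃ c : ℂ, tensorAction U t = c • t) :
    ∃ K : ℕ,
      (∀ l : Fin n → Fin d, t l ≠ 0 → ∀ k : Fin d,
        (Finset.univ.filter fun α : Fin n => l α = k).card = K) ∧
      n = K * d := by
  have ht' : IsSinglet t := hsinglet
  obtain ⟨l₀, hl₀⟩ := Function.ne_iff.mp ht
  obtain ⟨K, hK, hcard⟩ :=
    exists_occurrences_eq_and_card_eq_mul l₀ (ht'.occurrences_eq_occurrences hl₀)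
  refine ⟨K, fun l hl k => ?_, by simpa using hcard⟩
  exact (ht'.occurrences_eq_of_ne_zero hl hl₀ k).trans (hK k)
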